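/- Characterization of the order relation on Fermat reals: for little-oh polynomials x, y, define x ≤ y iff there exists z with z(t) = o(t), z(0) = 0, and x(t) ≤ y(t) + z(t) for all sufficiently small t ≥ 0. Then x ≤ y if and only if either x ∼ y or x(t) < y(t) for all sufficiently small t > 0. Consequently ≤ is a total order on the Fermat reals compatible with the ring structure. -/

import Mathlib

/-!
A little-oh polynomial is, up to an `o(t)` remainder vanishing at `0`, a finite sum `∑ c_b t^b`
with distinct exponents `b ≤ 1` and nonzero coefficients. If the sum is empty the function is
`o(t)` and vanishes at `0`. Otherwise, after division by `t^b₀` for the least exponent `b₀`,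
the sum tends to `c_b₀ ≠ 0` while any `o(t)` perturbation tends to `0` (as `b₀ ≤ 1`), so the
sign of `c_b₀` is the sign of the perturbed function for small `t > 0`. Applied to `y - x`,
this trichotomy gives the characterization of `x ≤ y`, and with it antisymmetry, totality and
compatibility with multiplication.
-/

open Filter Topology Set

/-- `f t = o(t)` as `t → 0⁺`. -/
def oT (f : ℝ → ℝ) : Prop :=
  Filter.Tendsto (fun t => f t / t) (nhdsWithin 0 (Set.Ioi 0)) (nhds 0)

/-- `x` is a little-oh polynomial. -/
def IsLittleOhPoly (x : ℝ → ℝ) : Prop :=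
  ∃ (k : ℕ) (r : ℝ) (α a : Fin k → ℝ) (w : ℝ → ℝ),
    (∀ i, 0 ≤ a i) ∧ w 0 = 0 ∧ oT w ∧
    ∀ t : ℝ, 0 ≤ t → x t = r + (∑ i, α i * t ^ (a i)) + w t

/-- Equality in the Fermat reals. -/
def FermatEq (x y : ℝ → ℝ) : Prop :=
  oT (fun t => x t - y t) ∧ x 0 = y 0

/-- The order relation on Fermat reals: `x ≤ y` iff there is `z` with
`z = o(t)`, `z 0 = 0` and `x t ≤ y t + z t` for all small `t ≥ 0`. -/
def Fle (x y : ℝ → ℝ) : Prop :=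
  ∃ z : ℝ → ℝ, oT z ∧ z 0 = 0 ∧
    ∀ᶠ t in nhdsWithin 0 (Set.Ici 0), x t ≤ y t + z t

theorem tendsto_rpow_nhdsGT_zero {b : ℝ} (hb : 0 ≤ b) :
    Tendsto (fun t : ℝ => t ^ b) (𝓝[>] 0) (𝓝 ((0 : ℝ) ^ b)) :=
  (Real.continuousAt_rpow_const 0 b (Or.inr hb)).continuousWithinAt.tendsto

namespace oT

variable {f g : ℝ → ℝ}

theorem zero : oT fun _ => 0 := by
  simp [oT]

theorem add (hf : oT f) (hg : oT g) : oT fun t => f t + g t := by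
  simpa [oT, add_div] using Tendsto.add hf hg

theorem neg (hf : oT f) : oT fun t => -f t := by
  simpa [oT, neg_div] using Tendsto.neg hf

theorem sub (hf : oT f) (hg : oT g) : oT fun t => f t - g t := by
  simpa [sub_eq_add_neg] using hf.add hg.neg

theorem sub_comm {x y : ℝ → ℝ} (h : oT fun t => x t - y t) : oT fun t => y t - x t := by
  simpa using h.neg

theorem sum {ι : Type*} (s : Finset ι) {F : ι → ℝ → ℝ} (hF : ∀ i ∈ s, oT (F i)) :
    oT fun t => ∑ i ∈ s, F i t := by
  simpa [oT, Finset.sum_div] using tendsto_finsetSum s hF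

theorem mul_tendsto {c : ℝ} (hf : oT f) (hg : Tendsto g (𝓝[>] 0) (𝓝 c)) :
    oT fun t => f t * g t := by
  simpa [oT, mul_div_right_comm] using Tendsto.mul hf hg

theorem congr' (hf : oT f) (h : ∀ᶠ t in 𝓝[>] 0, f t = g t) : oT g :=
  Tendsto.congr' (h.mono fun t ht => by rw [ht]) hf

theorem tendsto_div_rpow {b : ℝ} (hf : oT f) (hb : b ≤ 1) :
    Tendsto (fun t => f t / t ^ b) (𝓝[>] 0) (𝓝 0) := by
  have hpow := tendsto_rpow_nhdsGT_zero (sub_nonneg.2 hb)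
  have hlim : Tendsto (fun t => f t / t * t ^ (1 - b)) (𝓝[>] 0) (𝓝 0) := by
    simpa using Tendsto.mul hf hpow
  refine hlim.congr' ?_
  filter_upwards [self_mem_nhdsWithin] with t (ht : 0 < t)
  rw [Real.rpow_sub ht, Real.rpow_one]
  field_simp

theorem tendsto_zero (hf : oT f) : Tendsto f (𝓝[>] 0) (𝓝 0) := by
  simpa using hf.tendsto_div_rpow zero_le_one

end oT

theorem oT_const_mul_rpow (c : ℝ) {b : ℝ} (hb : 1 < b) : oT fun t => c * t ^ b := by
  have hlim := (tendsto_rpow_nhdsGT_zero (sub_pos.2 hb).le).const_mul c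
  rw [Real.zero_rpow (sub_pos.2 hb).ne', mul_zero] at hlim
  refine hlim.congr' ?_
  filter_upwards [self_mem_nhdsWithin] with t (ht : 0 < t)
  rw [Real.rpow_sub ht, Real.rpow_one, mul_div_assoc]

theorem tendsto_sum_mul_rpow_div_rpow {E : Finset ℝ} (c : ℝ → ℝ) {b₀ : ℝ}
    (hE : ∀ b ∈ E, b₀ < b) :
    Tendsto (fun t => (∑ b ∈ E, c b * t ^ b) / t ^ b₀) (𝓝[>] 0) (𝓝 0) := by
  have hterm : ∀ b ∈ E, Tendsto (fun t : ℝ => c b * t ^ (b - b₀)) (𝓝[>] 0) (𝓝 0) := by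
    intro b hb
    have hpos := sub_pos.2 (hE b hb)
    simpa [Real.zero_rpow hpos.ne'] using (tendsto_rpow_nhdsGT_zero hpos.le).const_mul (c b)
  have hsum := tendsto_finsetSum E hterm
  rw [Finset.sum_const_zero] at hsum
  refine hsum.congr' ?_
  filter_upwards [self_mem_nhdsWithin] with t (ht : 0 < t)
  rw [Finset.sum_div]
  exact Finset.sum_congr rfl fun b _ => by rw [Real.rpow_sub ht, mul_div_assoc]

theorem oT_or_tendsto_div_rpow_of_eq_sum_add {x w c : ℝ → ℝ} {E : Finset ℝ}
    (hE : ∀ b ∈ E, b ≤ 1 ∧ c b ≠ 0) (hw : oT w) (hw0 : w 0 = 0)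
    (hx : ∀ t, 0 ≤ t → x t = ∑ b ∈ E, c b * t ^ b + w t) :
    (oT x ∧ x 0 = 0) ∨
      ∃ b β : ℝ, b ≤ 1 ∧ β ≠ 0 ∧
        Tendsto (fun t => x t / t ^ b) (𝓝[>] 0) (𝓝 β) := by
  rcases E.eq_empty_or_nonempty with rfl | hne
  · simp only [Finset.sum_empty, zero_add] at hx
    refine Or.inl ⟨hw.congr' ?_, by rw [hx 0 le_rfl, hw0]⟩
    filter_upwards [self_mem_nhdsWithin] with t (ht : 0 < t) using (hx t ht.le).symm
  set b₀ := E.min' hne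
  have hb₀ : b₀ ∈ E := E.min'_mem hne
  have hrest : ∀ b ∈ E.erase b₀, b₀ < b := fun b hb =>
    (E.min'_le b (Finset.mem_of_mem_erase hb)).lt_of_ne (Finset.ne_of_mem_erase hb).symm
  refine Or.inr ⟨b₀, c b₀, (hE b₀ hb₀).1, (hE b₀ hb₀).2, ?_⟩
  have hlim := (tendsto_const_nhds (x := c b₀)).add
    ((tendsto_sum_mul_rpow_div_rpow c hrest).add (hw.tendsto_div_rpow (hE b₀ hb₀).1))
  rw [add_zero, add_zero] at hlim
  refine hlim.congr' ?_
  filter_upwards [self_mem_nhdsWithin] with t (ht : 0 < t)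
  have htb : t ^ b₀ ≠ 0 := (Real.rpow_pos_of_pos ht b₀).ne'
  rw [hx t ht.le, ← Finset.add_sum_erase E _ hb₀]
  field_simp
  ring

theorem sum_mul_rpow_eq_sum_image {ι : Type*} [Fintype ι] (α a : ι → ℝ) (t : ℝ) :
    ∑ i, α i * t ^ a i =
      ∑ b ∈ Finset.univ.image a, (∑ i with a i = b, α i) * t ^ b := by
  classical
  rw [← Finset.sum_fiberwise_of_maps_to fun i _ => Finset.mem_image_of_mem a (Finset.mem_univ i)]
  refine Finset.sum_congr rfl fun b _ => ?_
  rw [Finset.sum_mul]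
  exact Finset.sum_congr rfl fun i hi => by rw [(Finset.mem_filter.1 hi).2]

theorem IsLittleOhPoly.exists_eq_sum_rpow_add {x : ℝ → ℝ} (hx : IsLittleOhPoly x) :
    ∃ (E : Finset ℝ) (c w : ℝ → ℝ),
      (∀ b ∈ E, b ≤ 1 ∧ c b ≠ 0) ∧ oT w ∧ w 0 = 0 ∧
      ∀ t, 0 ≤ t → x t = ∑ b ∈ E, c b * t ^ b + w t := by
  classical
  obtain ⟨k, r, α, a, w, -, hw0, hw, hx⟩ := hx
  set A := Finset.univ.image (Fin.cons 0 a : Fin (k + 1) → ℝ)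
  set c : ℝ → ℝ := fun b => ∑ i with (Fin.cons 0 a : Fin (k + 1) → ℝ) i = b,
    (Fin.cons r α : Fin (k + 1) → ℝ) i
  have hA : ∀ t, r + ∑ i, α i * t ^ a i = ∑ b ∈ A, c b * t ^ b := fun t => by
    rw [← sum_mul_rpow_eq_sum_image, Fin.sum_univ_succ]
    simp
  -- terms of exponent above 1, and those with coefficient 0, are `o(t)` and join the remainder
  set P : ℝ → Prop := fun b => b ≤ 1 ∧ c b ≠ 0
  have hsmall : ∀ b ∈ A.filter (¬ P ·), oT (fun t => c b * t ^ b) ∧ c b * 0 ^ b = 0 := by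
    intro b hb
    rcases not_and_or.1 (Finset.mem_filter.1 hb).2 with hb1 | hcb
    · have hb1 : 1 < b := not_le.1 hb1
      exact ⟨oT_const_mul_rpow _ hb1, by rw [Real.zero_rpow (by linarith), mul_zero]⟩
    · simpa [not_not.1 hcb] using oT.zero
  refine ⟨A.filter P, c, fun t => ∑ b ∈ A.filter (¬ P ·), c b * t ^ b + w t,
    fun b hb => (Finset.mem_filter.1 hb).2, (oT.sum _ fun b hb => (hsmall b hb).1).add hw,
    by simp [Finset.sum_eq_zero fun b hb => (hsmall b hb).2, hw0], fun t ht => ?_⟩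
  rw [hx t ht, hA, ← Finset.sum_filter_add_sum_filter_not A P, add_assoc]

theorem eventually_pos_add_of_tendsto_div_rpow {d z : ℝ → ℝ} {b β : ℝ} (hb : b ≤ 1)
    (hβ : 0 < β) (hd : Tendsto (fun t => d t / t ^ b) (𝓝[>] 0) (𝓝 β)) (hz : oT z) :
    ∀ᶠ t in 𝓝[>] 0, 0 < d t + z t := by
  have hlim := hd.add (hz.tendsto_div_rpow hb)
  rw [add_zero] at hlim
  filter_upwards [hlim.eventually_const_lt hβ, self_mem_nhdsWithin] with t hpos (ht : 0 < t)
  rw [← add_div] at hpos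
  exact (div_pos_iff_of_pos_right (Real.rpow_pos_of_pos ht b)).1 hpos

theorem IsLittleOhPoly.trichotomy {d : ℝ → ℝ} (hd : IsLittleOhPoly d) :
    (oT d ∧ d 0 = 0) ∨ (∀ z, oT z → ∀ᶠ t in 𝓝[>] 0, 0 < d t + z t) ∨
      (∀ z, oT z → ∀ᶠ t in 𝓝[>] 0, d t + z t < 0) := by
  obtain ⟨E, c, w, hE, hw, hw0, hsum⟩ := hd.exists_eq_sum_rpow_add
  rcases oT_or_tendsto_div_rpow_of_eq_sum_add hE hw hw0 hsum with hzero | ⟨b, β, hb, hβ, hlim⟩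
  · exact Or.inl hzero
  rcases hβ.lt_or_gt with hneg | hpos
  · refine Or.inr (Or.inr fun z hz => ?_)
    have hlim' : Tendsto (fun t => -d t / t ^ b) (𝓝[>] 0) (𝓝 (-β)) := by
      simpa [neg_div] using hlim.neg
    filter_upwards [eventually_pos_add_of_tendsto_div_rpow hb (neg_pos.2 hneg) hlim' hz.neg]
      with t ht
    linarith
  · exact Or.inr (Or.inl fun z hz => eventually_pos_add_of_tendsto_div_rpow hb hpos hlim hz)

theorem IsLittleOhPoly.sub {x y : ℝ → ℝ} (hx : IsLittleOhPoly x) (hy : IsLittleOhPoly y) :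
    IsLittleOhPoly (x - y) := by
  obtain ⟨k₁, r₁, α₁, a₁, w₁, ha₁, hw₁0, hw₁, hx⟩ := hx
  obtain ⟨k₂, r₂, α₂, a₂, w₂, ha₂, hw₂0, hw₂, hy⟩ := hy
  refine ⟨k₁ + k₂, r₁ - r₂, Fin.append α₁ (-α₂), Fin.append a₁ a₂, w₁ - w₂,
    Fin.addCases (by simpa using ha₁) (by simpa using ha₂), by simp [hw₁0, hw₂0],
    hw₁.sub hw₂, fun t ht => ?_⟩
  simp only [Pi.sub_apply, hx t ht, hy t ht, Fin.sum_univ_add, Fin.append_left, Fin.append_right,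
    Pi.neg_apply, neg_mul, Finset.sum_neg_distrib]
  ring

theorem IsLittleOhPoly.tendsto_nhdsGT {x : ℝ → ℝ} (hx : IsLittleOhPoly x) :
    Tendsto x (𝓝[>] 0) (𝓝 (x 0)) := by
  obtain ⟨k, r, α, a, w, ha, hw0, hw, hx⟩ := hx
  have hlim : Tendsto (fun t => r + ∑ i, α i * t ^ a i + w t) (𝓝[>] 0)
      (𝓝 (r + ∑ i, α i * 0 ^ a i + w 0)) := by
    refine (tendsto_const_nhds.add (tendsto_finsetSum _ fun i _ =>
      (tendsto_rpow_nhdsGT_zero (ha i)).const_mul (α i))).add ?_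
    simpa [hw0] using hw.tendsto_zero
  rw [hx 0 le_rfl]
  refine hlim.congr' ?_
  filter_upwards [self_mem_nhdsWithin] with t (ht : 0 < t) using (hx t ht.le).symm

theorem eventually_nhdsWithin_Ici_iff {a : ℝ} {p : ℝ → Prop} :
    (∀ᶠ t in 𝓝[≥] a, p t) ↔ p a ∧ ∀ᶠ t in 𝓝[>] a, p t := by
  rw [← Ioi_insert]
  exact mem_nhdsWithin_insert

theorem FermatEq.symm {x y : ℝ → ℝ} (h : FermatEq x y) : FermatEq y x :=
  ⟨h.1.sub_comm, h.2.symm⟩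

theorem FermatEq.mul_right {x y w : ℝ → ℝ} {c : ℝ} (h : FermatEq x y)
    (hw : Tendsto w (𝓝[>] 0) (𝓝 c)) : FermatEq (x * w) (y * w) := by
  refine ⟨(h.1.mul_tendsto hw).congr' (Eventually.of_forall fun t => ?_), ?_⟩
  · simp only [Pi.mul_apply]
    ring
  · simp only [Pi.mul_apply, h.2]

theorem fermatEq_mul_right_of_fermatEq_zero {x y w : ℝ → ℝ} {a b : ℝ} (hw : FermatEq 0 w)
    (hx : Tendsto x (𝓝[>] 0) (𝓝 a)) (hy : Tendsto y (𝓝[>] 0) (𝓝 b)) :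
    FermatEq (x * w) (y * w) := by
  have hwo : oT w := by simpa using hw.1.sub_comm
  refine ⟨(hwo.mul_tendsto (hx.sub hy)).congr' (Eventually.of_forall fun t => ?_), ?_⟩
  · simp only [Pi.mul_apply]
    ring
  · simp [← hw.2]

theorem FermatEq.of_sub {x y : ℝ → ℝ} (hd : oT (y - x)) (hd0 : (y - x) 0 = 0) :
    FermatEq x y :=
  ⟨hd.sub_comm, (sub_eq_zero.1 hd0).symm⟩

theorem fle_of_fermatEq {x y : ℝ → ℝ} (h : FermatEq x y) : Fle x y :=
  ⟨fun t => x t - y t, h.1, by simp [h.2], Eventually.of_forall fun t => by simp⟩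

theorem fle_of_eventually_le {x y : ℝ → ℝ} (hx : Tendsto x (𝓝[>] 0) (𝓝 (x 0)))
    (hy : Tendsto y (𝓝[>] 0) (𝓝 (y 0))) (h : ∀ᶠ t in 𝓝[>] 0, x t ≤ y t) :
    Fle x y := by
  refine ⟨fun _ => 0, oT.zero, rfl, eventually_nhdsWithin_Ici_iff.2 ⟨?_, ?_⟩⟩
  · simpa using le_of_tendsto_of_tendsto hx hy h
  · simpa using h

theorem Fle.refl (x : ℝ → ℝ) : Fle x x :=
  ⟨fun _ => 0, oT.zero, rfl, Eventually.of_forall fun t => by simp⟩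

theorem Fle.trans {x y z : ℝ → ℝ} : Fle x y → Fle y z → Fle x z := by
  rintro ⟨u, hu, hu0, hxy⟩ ⟨v, hv, hv0, hyz⟩
  refine ⟨fun t => u t + v t, hu.add hv, by simp [hu0, hv0], ?_⟩
  filter_upwards [hxy, hyz] with t h₁ h₂
  linarith

theorem Fle.add_right {x y : ℝ → ℝ} (z : ℝ → ℝ) : Fle x y → Fle (x + z) (y + z) := by
  rintro ⟨u, hu, hu0, hxy⟩
  refine ⟨u, hu, hu0, ?_⟩
  filter_upwards [hxy] with t ht
  simp only [Pi.add_apply]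
  linarith

theorem Fle.fermatEq_or_eventually_lt {x y : ℝ → ℝ} (h : Fle x y)
    (hd : IsLittleOhPoly (y - x)) :
    FermatEq x y ∨ ∀ᶠ t in 𝓝[>] 0, x t < y t := by
  obtain ⟨z, hz, -, hxy⟩ := h
  rcases hd.trichotomy with ⟨hd, hd0⟩ | hpos | hneg
  · exact Or.inl (FermatEq.of_sub hd hd0)
  · refine Or.inr ?_
    filter_upwards [hpos _ oT.zero] with t ht
    simpa using ht
  · exfalso
    obtain ⟨t, hlt, hle⟩ := ((hneg z hz).and (eventually_nhdsWithin_Ici_iff.1 hxy).2).exists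
    simp only [Pi.sub_apply] at hlt
    linarith

theorem fle_iff {x y : ℝ → ℝ} (hx : IsLittleOhPoly x) (hy : IsLittleOhPoly y) :
    Fle x y ↔ FermatEq x y ∨ ∀ᶠ t in 𝓝[>] 0, x t < y t := by
  refine ⟨fun h => h.fermatEq_or_eventually_lt (hy.sub hx), ?_⟩
  rintro (h | h)
  · exact fle_of_fermatEq h
  · exact fle_of_eventually_le hx.tendsto_nhdsGT hy.tendsto_nhdsGT (h.mono fun _ => le_of_lt)

theorem Fle.antisymm {x y : ℝ → ℝ} (hx : IsLittleOhPoly x) (hy : IsLittleOhPoly y)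
    (hxy : Fle x y) (hyx : Fle y x) : FermatEq x y := by
  rcases hxy.fermatEq_or_eventually_lt (hy.sub hx) with h | hlt
  · exact h
  rcases hyx.fermatEq_or_eventually_lt (hx.sub hy) with h | hgt
  · exact h.symm
  obtain ⟨t, h₁, h₂⟩ := (hlt.and hgt).exists
  exact absurd h₁ h₂.not_gt

theorem fle_total {x y : ℝ → ℝ} (hx : IsLittleOhPoly x) (hy : IsLittleOhPoly y) :
    Fle x y ∨ Fle y x := by
  rcases (hy.sub hx).trichotomy with ⟨hd, hd0⟩ | hpos | hneg
  · exact Or.inl (fle_of_fermatEq (FermatEq.of_sub hd hd0))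
  · refine Or.inl (fle_of_eventually_le hx.tendsto_nhdsGT hy.tendsto_nhdsGT ?_)
    filter_upwards [hpos _ oT.zero] with t ht
    simpa using ht.le
  · refine Or.inr (fle_of_eventually_le hy.tendsto_nhdsGT hx.tendsto_nhdsGT ?_)
    filter_upwards [hneg _ oT.zero] with t ht
    simpa using ht.le

theorem Fle.mul_right {x y w : ℝ → ℝ} (hx : IsLittleOhPoly x) (hy : IsLittleOhPoly y)
    (hw : IsLittleOhPoly w) (hxy : Fle x y) (hw0 : Fle 0 w) : Fle (x * w) (y * w) := by
  have hxt := hx.tendsto_nhdsGT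
  have hyt := hy.tendsto_nhdsGT
  have hwt := hw.tendsto_nhdsGT
  rcases hxy.fermatEq_or_eventually_lt (hy.sub hx) with hxy | hlt
  · exact fle_of_fermatEq (hxy.mul_right hwt)
  rcases hw0.fermatEq_or_eventually_lt (by simpa using hw) with hw0 | hpos
  · exact fle_of_fermatEq (fermatEq_mul_right_of_fermatEq_zero hw0 hxt hyt)
  refine fle_of_eventually_le (hxt.mul hwt) (hyt.mul hwt) ?_
  filter_upwards [hlt, hpos] with t h₁ h₂
  exact mul_le_mul_of_nonneg_right h₁.le h₂.le

/-- Characterization of the order relation: `x ≤ y` iff `x ∼ y` or `x < y`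
pointwise for all small `t > 0`; consequently `≤` is (modulo `∼`) a total
order on the Fermat reals, compatible with the ring operations. -/
theorem order_characterization :
    (∀ x y : ℝ → ℝ, IsLittleOhPoly x → IsLittleOhPoly y →
      (Fle x y ↔ (FermatEq x y ∨ ∀ᶠ t in nhdsWithin 0 (Set.Ioi 0), x t < y t))) ∧
    (∀ x : ℝ → ℝ, IsLittleOhPoly x → Fle x x) ∧
    (∀ x y z : ℝ → ℝ, IsLittleOhPoly x → IsLittleOhPoly y → IsLittleOhPoly z →
      Fle x y → Fle y z → Fle x z) ∧
    (∀ x y : ℝ → ℝ, IsLittleOhPoly x → IsLittleOhPoly y →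
      Fle x y → Fle y x → FermatEq x y) ∧
    (∀ x y : ℝ → ℝ, IsLittleOhPoly x → IsLittleOhPoly y → Fle x y ∨ Fle y x) ∧
    (∀ x y z : ℝ → ℝ, IsLittleOhPoly x → IsLittleOhPoly y → IsLittleOhPoly z →
      Fle x y → Fle (x + z) (y + z)) ∧
    (∀ x y w : ℝ → ℝ, IsLittleOhPoly x → IsLittleOhPoly y → IsLittleOhPoly w →
      Fle x y → Fle 0 w → Fle (x * w) (y * w)) :=
  ⟨fun _ _ hx hy => fle_iff hx hy,
    fun x _ => Fle.refl x,
    fun _ _ _ _ _ _ => Fle.trans,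
    fun _ _ hx hy => Fle.antisymm hx hy,
    fun _ _ hx hy => fle_total hx hy,
    fun _ _ z _ _ _ => Fle.add_right z,
    fun _ _ _ hx hy hw => Fle.mul_right hx hy hw⟩
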